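/- arXiv:math/0304338 — 4 statements merged into one kernel-verified Lean document; each statement's English description precedes it below -/
import Mathlib

section
/- Lebesgue volume is continuous on convex bodies with respect to the Hausdorff metric: if convex bodies K_j converge to K in the Hausdorff metric, then vol(K_j) → vol(K). -/
/-!
The frontier of a convex body is null, so it suffices that the indicators of `K j` converge to
that of `L` off the frontier of `L`. A point outside `L` stays outside `K j` once the Hausdorff
distance drops below its distance to `L`. A point whose `r`-ball lies in `L` lies in `K j` once
the distance drops below `r`: otherwise a hyperplane separates it from `K j`, and moving almost
`r` away from that hyperplane leaves the `r`-thickening of `K j`. Since every `K j` eventually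
lies in the `1`-thickening of `L`, dominated convergence finishes the proof.
-/

open MeasureTheory Filter Metric Topology

theorem Convex.mem_of_ball_subset_thickening {E : Type*} [NormedAddCommGroup E]
    [NormedSpace ℝ E] {A : Set E} (hA : Convex ℝ A) (hAc : IsClosed A) {x : E} {r : ℝ}
    (hr : 0 < r) (h : ball x r ⊆ Metric.thickening r A) : x ∈ A := by
  by_contra hx
  obtain ⟨f, u, hfA, hux⟩ := geometric_hahn_banach_closed_point hA hAc hx
  obtain ⟨w, hw, hfw⟩ : ∃ w : E, ‖w‖ < 1 ∧ ‖f‖ - (f x - u) / r < f w := by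
    obtain ⟨w, hw, hfw⟩ := f.exists_lt_apply_of_lt_opNorm
      (sub_lt_self ‖f‖ (div_pos (sub_pos.2 hux) hr))
    rcases lt_abs.1 hfw with hpos | hneg
    · exact ⟨w, hw, hpos⟩
    · exact ⟨-w, by rwa [norm_neg], by rwa [map_neg]⟩
  have hz : x + r • w ∈ ball x r := by
    rw [mem_ball, dist_self_add_left, norm_smul, Real.norm_of_nonneg hr.le]
    exact mul_lt_of_lt_one_right hr hw
  obtain ⟨a, ha, hza⟩ := mem_thickening_iff.1 (h hz)
  have hfa : f (x + r • w) - f a ≤ ‖f‖ * r := by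
    rw [← map_sub]
    exact (le_abs_self _).trans ((f.le_opNorm _).trans
      (mul_le_mul_of_nonneg_left (dist_eq_norm _ a ▸ hza.le) (norm_nonneg f)))
  have hfz : f (x + r • w) = f x + r * f w := by rw [map_add, map_smul, smul_eq_mul]
  have hfw' : (‖f‖ - f w) * r < f x - u := (lt_div_iff₀ hr).1 (sub_lt_comm.1 hfw)
  linarith [hfA a ha]

namespace ConvexBody

section Normed

variable {V : Type*} [NormedAddCommGroup V] [NormedSpace ℝ V]

theorem coe_subset_thickening_of_dist_lt {K L : ConvexBody V} {ε : ℝ} (h : dist K L < ε) :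
    (K : Set V) ⊆ thickening ε (L : Set V) := fun _ hx =>
  mem_thickening_iff.2 <| exists_dist_lt_of_hausdorffDist_lt hx
    (hausdorffDist_coe K L ▸ h) hausdorffEDist_ne_top

variable {ι : Type*} {l : Filter ι} {K : ι → ConvexBody V} {L : ConvexBody V}

theorem eventually_mem_of_mem_interior (hK : Tendsto K l (𝓝 L)) {x : V}
    (hx : x ∈ interior (L : Set V)) : ∀ᶠ i in l, x ∈ K i := by
  obtain ⟨r, hr, hball⟩ := nhds_basis_ball.mem_iff.1 (mem_interior_iff_mem_nhds.1 hx)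
  filter_upwards [tendsto_iff_dist_tendsto_zero.1 hK |>.eventually (gt_mem_nhds hr)] with i hi
  exact (K i).convex.mem_of_ball_subset_thickening (K i).isClosed hr <|
    hball.trans (coe_subset_thickening_of_dist_lt (by rwa [dist_comm]))

theorem eventually_notMem_of_notMem (hK : Tendsto K l (𝓝 L)) {x : V}
    (hx : x ∉ (L : Set V)) : ∀ᶠ i in l, x ∉ K i := by
  have hd : 0 < infDist x (L : Set V) := (L.isClosed.notMem_iff_infDist_pos L.nonempty).1 hx
  filter_upwards [tendsto_iff_dist_tendsto_zero.1 hK |>.eventually (gt_mem_nhds hd)]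
    with i hi hxK
  exact (lt_irrefl _) ((mem_thickening_iff_infDist_lt L.nonempty).1
    (coe_subset_thickening_of_dist_lt hi hxK))

end Normed

variable {E : Type*} [NormedAddCommGroup E] [NormedSpace ℝ E] [FiniteDimensional ℝ E]
  [MeasurableSpace E] [BorelSpace E] (μ : Measure E) [μ.IsAddHaarMeasure]
  {ι : Type*} {l : Filter ι} {K : ι → ConvexBody E} {L : ConvexBody E}

theorem ae_eventually_mem_iff (hK : Tendsto K l (𝓝 L)) :
    ∀ᵐ x ∂μ, ∀ᶠ i in l, x ∈ K i ↔ x ∈ L := by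
  filter_upwards [measure_eq_zero_iff_ae_notMem.1 (L.convex.addHaar_frontier μ)] with x hx
  by_cases hxL : x ∈ L
  · have hxint : x ∈ interior (L : Set E) := self_sdiff_frontier (L : Set E) ▸ ⟨hxL, hx⟩
    filter_upwards [eventually_mem_of_mem_interior hK hxint] with i hi
    exact iff_of_true hi hxL
  · filter_upwards [eventually_notMem_of_notMem hK hxL] with i hi
    exact iff_of_false hi hxL

theorem tendsto_measure [l.IsCountablyGenerated] (hK : Tendsto K l (𝓝 L)) :
    Tendsto (fun i => μ (K i)) l (𝓝 (μ L)) :=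
  tendsto_measure_of_ae_tendsto_indicator l L.isClosed.measurableSet
    (fun i => (K i).isClosed.measurableSet) isOpen_thickening.measurableSet
    (L.isCompact.isBounded.thickening (δ := 1)).measure_lt_top.ne
    (hK.eventually (ball_mem_nhds L one_pos) |>.mono fun _ hi =>
      coe_subset_thickening_of_dist_lt hi)
    (ae_eventually_mem_iff μ hK)

end ConvexBody

/-- Lebesgue volume is continuous on convex bodies for the Hausdorff metric:
if convex bodies `K j` converge to `L` in the Hausdorff metric, then `vol (K j) → vol L`. -/
theorem volume_continuous_on_convex_bodies (n : ℕ)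
    (K : ℕ → ConvexBody (EuclideanSpace ℝ (Fin n)))
    (L : ConvexBody (EuclideanSpace ℝ (Fin n)))
    (hconv : Tendsto K atTop (nhds L)) :
    Tendsto (fun j => (volume (K j : Set (EuclideanSpace ℝ (Fin n)))).toReal) atTop
      (nhds (volume (L : Set (EuclideanSpace ℝ (Fin n)))).toReal) :=
  (ENNReal.tendsto_toReal L.isCompact.measure_lt_top.ne).comp
    (ConvexBody.tendsto_measure volume hconv)
end

section
/- If φ is a translation-invariant valuation on convex bodies in ℝ^n that is homogeneous of degree 0 and continuous with respect to the Hausdorff metric, then φ is constant, i.e. φ is a scalar multiple of the Euler characteristic. -/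
noncomputable section

variable {n : ℕ}

/-- The valuation property for a function on convex bodies: additivity on pairs whose union is
again a convex body. -/
def IsValuation (φ : ConvexBody (EuclideanSpace ℝ (Fin n)) → ℝ) : Prop :=
  ∀ K₁ K₂ U I : ConvexBody (EuclideanSpace ℝ (Fin n)),
    (U : Set (EuclideanSpace ℝ (Fin n))) = (K₁ : Set _) ∪ (K₂ : Set _) →
    (I : Set (EuclideanSpace ℝ (Fin n))) = (K₁ : Set _) ∩ (K₂ : Set _) →
    φ U = φ K₁ + φ K₂ - φ I

/-- The one-point convex body `{x}`. -/
def pt (x : EuclideanSpace ℝ (Fin n)) : ConvexBody (EuclideanSpace ℝ (Fin n)) :=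
  ⟨{x}, convex_singleton x, isCompact_singleton, Set.singleton_nonempty x⟩

lemma tendsto_smul_pt (K : ConvexBody (EuclideanSpace ℝ (Fin n))) :
    Filter.Tendsto (fun m : ℕ => ((m : ℝ) + 1)⁻¹ • K) Filter.atTop (nhds (pt 0)) := by
  obtain ⟨C, hC_pos, hC_bdd⟩ := K.isBounded.exists_pos_norm_le
  rw [tendsto_iff_dist_tendsto_zero]
  have hbound : ∀ m : ℕ, dist (((m : ℝ) + 1)⁻¹ • K) (pt 0) ≤ ((m : ℝ) + 1)⁻¹ * C := by
    intro m
    have hm : (0:ℝ) < ((m : ℝ) + 1)⁻¹ := by positivity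
    rw [dist_comm]
    rw [← ConvexBody.hausdorffDist_coe, ConvexBody.coe_smul]
    show Metric.hausdorffDist ({0} : Set _) _ ≤ _
    apply Metric.hausdorffDist_le_of_mem_dist (by positivity)
    · intro x hx
      obtain ⟨k, hk⟩ := K.nonempty
      refine ⟨((m : ℝ) + 1)⁻¹ • k, Set.smul_mem_smul_set hk, ?_⟩
      have hx0 : x = 0 := hx
      rw [hx0, dist_zero_left, norm_smul, Real.norm_eq_abs, abs_of_pos hm]
      exact mul_le_mul_of_nonneg_left (hC_bdd _ hk) hm.le
    · intro y hy
      obtain ⟨k, hk, rfl⟩ := hy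
      refine ⟨0, rfl, ?_⟩
      rw [dist_zero_right, norm_smul, Real.norm_eq_abs, abs_of_pos hm]
      exact mul_le_mul_of_nonneg_left (hC_bdd _ hk) hm.le
  have h0 : Filter.Tendsto (fun m : ℕ => ((m : ℝ) + 1)⁻¹ * C) Filter.atTop (nhds 0) := by
    have := (tendsto_one_div_add_atTop_nhds_zero_nat).mul_const C
    simpa [one_div] using this
  refine squeeze_zero (fun m => dist_nonneg) hbound h0

/-- a translation-invariant, Hausdorff-continuous valuation, homogeneous of
degree `0`, is constant, i.e. a scalar multiple of the Euler characteristic `χ ≡ 1`. -/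
theorem homog_zero_valuation_is_constant
    (φ : ConvexBody (EuclideanSpace ℝ (Fin n)) → ℝ)
    (hval : IsValuation φ)
    (hcont : Continuous φ)
    (htrans : ∀ (K : ConvexBody (EuclideanSpace ℝ (Fin n))) (x : EuclideanSpace ℝ (Fin n)),
      φ (K + pt x) = φ K)
    (hhom : ∀ (lam : ℝ), 0 < lam → ∀ K : ConvexBody (EuclideanSpace ℝ (Fin n)),
      φ (lam • K) = φ K) :
    ∃ c : ℝ, ∀ K : ConvexBody (EuclideanSpace ℝ (Fin n)), φ K = c * 1 := by
  refine ⟨φ (pt 0), fun K => ?_⟩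
  rw [mul_one]
  have h1 : Filter.Tendsto (fun m : ℕ => φ (((m : ℝ) + 1)⁻¹ • K)) Filter.atTop
      (nhds (φ (pt 0))) := (hcont.tendsto _).comp (tendsto_smul_pt K)
  have h2 : (fun m : ℕ => φ (((m : ℝ) + 1)⁻¹ • K)) = fun _ => φ K := by
    funext m
    exact hhom _ (by positivity) K
  rw [h2] at h1
  exact tendsto_nhds_unique tendsto_const_nhds h1
end
end

section
/- For convex bodies K₁, K₂ in ℝ^n with K₁ ∪ K₂ convex, and any convex body A, one has (K₁ ∪ K₂) + A = (K₁ + A) ∪ (K₂ + A) and (K₁ ∩ K₂) + A = (K₁ + A) ∩ (K₂ + A). -/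
open Pointwise

/-- for convex bodies `K₁, K₂` with `K₁ ∪ K₂` convex and any convex body `A`,
Minkowski addition distributes over this union and intersection:
`(K₁ ∪ K₂) + A = (K₁ + A) ∪ (K₂ + A)` and `(K₁ ∩ K₂) + A = (K₁ + A) ∩ (K₂ + A)`. -/
theorem minkowski_sum_union_inter (n : ℕ)
    (K₁ K₂ A : Set (EuclideanSpace ℝ (Fin n)))
    (hK₁c : IsCompact K₁) (hK₁ : Convex ℝ K₁) (hK₁n : K₁.Nonempty)
    (hK₂c : IsCompact K₂) (hK₂ : Convex ℝ K₂) (hK₂n : K₂.Nonempty)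
    (hAc : IsCompact A) (hA : Convex ℝ A) (hAn : A.Nonempty)
    (hU : Convex ℝ (K₁ ∪ K₂)) :
    (K₁ ∪ K₂) + A = (K₁ + A) ∪ (K₂ + A) ∧
    (K₁ ∩ K₂) + A = (K₁ + A) ∩ (K₂ + A) := by
  constructor
  · exact Set.union_add
  · apply Set.Subset.antisymm
    · rintro x ⟨k, hk, a, ha, rfl⟩
      exact ⟨⟨k, hk.1, a, ha, rfl⟩, ⟨k, hk.2, a, ha, rfl⟩⟩
    · rintro x ⟨⟨k₁, hk₁, a₁, ha₁, h1⟩, ⟨k₂, hk₂, a₂, ha₂, h2⟩⟩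
      -- consider f t = (1-t)•k₁ + t•k₂
      set f : ℝ → EuclideanSpace ℝ (Fin n) := fun t => (1 - t) • k₁ + t • k₂ with hf
      have hfc : Continuous f := by fun_prop
      have hcov : Set.Icc (0:ℝ) 1 ⊆ (f ⁻¹' K₁) ∪ (f ⁻¹' K₂) := by
        intro t ht
        have : f t ∈ K₁ ∪ K₂ := hU (Or.inl hk₁) (Or.inr hk₂)
          (by linarith [ht.2]) ht.1 (by ring)
        exact this
      have hpc : IsPreconnected (Set.Icc (0:ℝ) 1) := isPreconnected_Icc
      have := (isPreconnected_closed_iff.1 hpc) (f ⁻¹' K₁) (f ⁻¹' K₂)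
        (hK₁c.isClosed.preimage hfc) (hK₂c.isClosed.preimage hfc) hcov
        ⟨0, by constructor; · exact Set.left_mem_Icc.2 zero_le_one
               · show f 0 ∈ K₁; simp [hf]; exact hk₁⟩
        ⟨1, by constructor; · exact Set.right_mem_Icc.2 zero_le_one
               · show f 1 ∈ K₂; simp [hf]; exact hk₂⟩
      obtain ⟨t, ht, htK₁, htK₂⟩ := this
      refine ⟨f t, ⟨htK₁, htK₂⟩, (1 - t) • a₁ + t • a₂,
        hA ha₁ ha₂ (by linarith [ht.2]) ht.1 (by ring), ?_⟩
      have hx : x = (1 - t) • (k₁ + a₁) + t • (k₂ + a₂) := by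
        beta_reduce at h1 h2; rw [← h1, h2.trans h1.symm]; module
      show f t + ((1 - t) • a₁ + t • a₂) = x
      rw [hx]; simp only [hf]; module
end

section
/- Hadwiger's theorem, dimension 1: every continuous translation-invariant valuation φ on compact intervals [a,b] ⊆ ℝ is of the form φ([a,b]) = c₀ + c₁(b−a) for constants c₀ = φ({0}) and c₁; in particular the space of such valuations is two-dimensional, spanned by the Euler characteristic and the length. -/
/-- Hadwiger's theorem in dimension 1: every continuous translation-invariant
valuation `φ` on compact intervals `[a,b] ⊆ ℝ` (encoded as `φ a b` for `a ≤ b`) has the form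
`φ([a,b]) = c₀ + c₁ (b - a)` with `c₀ = φ({0})`; so such valuations form the two-dimensional
span of the Euler characteristic and the length. -/
theorem hadwiger_dimension_one
    (φ : ℝ → ℝ → ℝ)
    (hval : ∀ a b b' c : ℝ, a ≤ b → b ≤ b' → b' ≤ c →
      φ a c = φ a b' + φ b c - φ b b')
    (htrans : ∀ a b t : ℝ, a ≤ b → φ (a + t) (b + t) = φ a b)
    (hcont : ContinuousOn (fun p : ℝ × ℝ => φ p.1 p.2) {p : ℝ × ℝ | p.1 ≤ p.2}) :
    ∃ c₁ : ℝ, ∀ a b : ℝ, a ≤ b → φ a b = φ 0 0 + c₁ * (b - a) := by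
  set f : ℝ → ℝ := fun x => φ 0 x - φ 0 0 with hfdef
  have hadd : ∀ x y : ℝ, 0 ≤ x → 0 ≤ y → f (x + y) = f x + f y := by
    intro x y hx hy
    have h1 := hval 0 x x (x + y) hx le_rfl (by linarith)
    have h2 := htrans 0 y x hy
    have h3 := htrans 0 0 x le_rfl
    rw [zero_add, add_comm y x] at h2
    rw [zero_add] at h3
    simp only [hfdef]
    rw [h2, h3] at h1
    linarith
  have hf0 : f 0 = 0 := by
    have := hadd 0 0 le_rfl le_rfl
    simpa using this.symm
  -- continuity of f on [0,∞)
  have hfc : ContinuousOn f (Set.Ici (0 : ℝ)) := by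
    have : ContinuousOn (fun x : ℝ => φ 0 x) (Set.Ici (0 : ℝ)) := by
      have hmap : Set.MapsTo (fun x : ℝ => ((0 : ℝ), x)) (Set.Ici (0 : ℝ))
          {p : ℝ × ℝ | p.1 ≤ p.2} := fun x hx => hx
      exact hcont.comp (Continuous.continuousOn (by continuity)) hmap
    exact this.sub continuousOn_const
  -- extend to an additive map on all of ℝ
  set F : ℝ → ℝ := fun x => f (max x 0) - f (max (-x) 0) with hFdef
  have hkey : ∀ x u v : ℝ, 0 ≤ u → 0 ≤ v → u - v = x → f u - f v = F x := by
    intro x u v hu hv huv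
    have hx1 : max x 0 ≤ u := max_le (by linarith) hu
    set t := u - max x 0 with ht
    have ht0 : 0 ≤ t := by linarith
    have hv' : v = max (-x) 0 + t := by
      rcases le_total x 0 with h | h
      · rw [max_eq_left (neg_nonneg.mpr h)]
        have hm : max x 0 = 0 := max_eq_right h
        rw [ht, hm]; linarith
      · rw [max_eq_right (neg_nonpos.mpr h)]
        have hm : max x 0 = x := max_eq_left h
        rw [ht, hm]; linarith
    have hu' : u = max x 0 + t := by simp [ht]
    show f u - f v = f (max x 0) - f (max (-x) 0)
    rw [hu', hv', hadd _ _ (le_max_right x 0) ht0,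
      hadd _ _ (le_max_right (-x) 0) ht0]
    ring
  have hFadd : ∀ x y : ℝ, F (x + y) = F x + F y := by
    intro x y
    have h1 : f (max x 0 + max y 0) - f (max (-x) 0 + max (-y) 0) = F (x + y) := by
      apply hkey
      · positivity
      · positivity
      · rcases le_total x 0 with hx | hx <;> rcases le_total y 0 with hy | hy <;>
          simp [max_eq_left, max_eq_right, hx, hy, neg_nonneg.mpr, neg_nonpos.mpr] <;> ring
    rw [hadd _ _ (le_max_right x 0) (le_max_right y 0),
      hadd _ _ (le_max_right (-x) 0) (le_max_right (-y) 0)] at h1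
    rw [← h1]
    show f (max x 0) + f (max y 0) - (f (max (-x) 0) + f (max (-y) 0)) =
      f (max x 0) - f (max (-x) 0) + (f (max y 0) - f (max (-y) 0))
    ring
  have hFcont : Continuous F := by
    have hc1 : Continuous fun x : ℝ => f (max x 0) :=
      hfc.comp_continuous (continuous_id.max continuous_const) fun x => le_max_right x 0
    have hc2 : Continuous fun x : ℝ => f (max (-x) 0) :=
      hfc.comp_continuous (continuous_neg.max continuous_const) fun x => le_max_right (-x) 0
    exact hc1.sub hc2
  -- F is additive and continuous, hence linear
  let Fhom : ℝ →+ ℝ := AddMonoidHom.mk' F hFadd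
  have hFlin : ∀ x : ℝ, F x = x * F 1 := by
    intro x
    have h := (AddMonoidHom.toRealLinearMap Fhom hFcont).map_smul x (1 : ℝ)
    have hco : ⇑(AddMonoidHom.toRealLinearMap Fhom hFcont) = F :=
      AddMonoidHom.coe_toRealLinearMap Fhom hFcont
    rw [hco] at h
    simp only [smul_eq_mul, mul_one] at h
    exact h
  refine ⟨F 1, fun a b hab => ?_⟩
  have h2 := htrans 0 (b - a) a (by linarith)
  rw [zero_add, sub_add_cancel] at h2
  have hFba : F (b - a) = f (b - a) := by
    show f (max (b - a) 0) - f (max (-(b - a)) 0) = f (b - a)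
    rw [max_eq_left (by linarith : (0:ℝ) ≤ b - a), max_eq_right (by linarith : -(b-a) ≤ 0), hf0]
    ring
  have : f (b - a) = (b - a) * F 1 := by rw [← hFba, hFlin]
  simp only [hfdef] at this
  linarith [h2, this]
end
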